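/- arXiv:2311.13709 — 3 statements merged into one kernel-verified Lean document; each statement's English description precedes it below -/
import Mathlib

section
/- Let β_r, β_m > 0 and let 0 < α < exp(−β_r·β_m/2). Let d ≥ 1 and suppose r : ℕ → ℕ and m : ℕ → ℕ satisfy r(n) ≥ n^d / exp(β_r·√(log n)) and n ≥ m(n) ≥ n / exp(β_m·√(log n)) for all n ≥ 1. Then there exist infinitely many n ∈ ℕ such that r(n)/n^d ≥ α · r(m(n)) / m(n)^d. -/
open Real

set_option maxHeartbeats 2000000 in
theorem stmt2 (βr βm α : ℝ) (hβr : 0 < βr) (hβm : 0 < βm)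
    (hα0 : 0 < α) (hα : α < Real.exp (-(βr * βm) / 2))
    (d : ℕ) (hd : 1 ≤ d) (r m : ℕ → ℕ)
    (hr : ∀ n : ℕ, 1 ≤ n →
      (r n : ℝ) ≥ (n : ℝ) ^ d / Real.exp (βr * Real.sqrt (Real.log n)))
    (hm₁ : ∀ n : ℕ, 1 ≤ n → m n ≤ n)
    (hm₂ : ∀ n : ℕ, 1 ≤ n →
      (m n : ℝ) ≥ (n : ℝ) / Real.exp (βm * Real.sqrt (Real.log n))) :
    {n : ℕ | (r n : ℝ) / (n : ℝ) ^ d ≥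
      α * (r (m n) : ℝ) / (m n : ℝ) ^ d}.Infinite := by
  apply Set.infinite_of_forall_exists_gt
  intro N₀
  by_contra hcon
  push_neg at hcon
  have H : ∀ n : ℕ, N₀ < n →
      (r n : ℝ) / (n : ℝ) ^ d < α * ((r (m n) : ℝ) / (m n : ℝ) ^ d) := by
    intro n hn
    by_contra h
    push_neg at h
    rw [← mul_div_assoc] at h
    exact absurd hn (not_lt.2 (hcon n h))
  have hfpos : ∀ n : ℕ, 1 ≤ n → 0 < (r n : ℝ) / (n : ℝ) ^ d := by
    intro n hn
    have hn1 : (1 : ℝ) ≤ (n : ℝ) := by exact_mod_cast hn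
    have hp : (0 : ℝ) < (n : ℝ) ^ d := by positivity
    have h2 := hr n hn
    have h3 : (0 : ℝ) < (r n : ℝ) := lt_of_lt_of_le (by positivity) h2
    exact div_pos h3 hp
  have hlog0 : ∀ n : ℕ, 1 ≤ n → 0 ≤ Real.log n := by
    intro n hn
    exact Real.log_nonneg (by exact_mod_cast hn)
  -- constants
  have hlogα : Real.log α < -(βr * βm / 2) := by
    have := Real.log_lt_log hα0 hα
    rwa [Real.log_exp, neg_div] at this
  obtain ⟨δ, hδ, hδeq⟩ : ∃ δ : ℝ, 0 < δ ∧ -Real.log α = βr * βm / 2 + δ :=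
    ⟨-Real.log α - βr * βm / 2, by linarith, by ring⟩
  obtain ⟨a, ha, haeq⟩ : ∃ a : ℝ, 0 < a ∧ a * βm = βr * βm + δ :=
    ⟨βr + δ / βm, by positivity, by field_simp⟩
  have hden : 0 < βr * βm / 2 + δ := by positivity
  obtain ⟨ε, hε0, hε1, hεeq⟩ : ∃ ε : ℝ, 0 < ε ∧ ε < 1 ∧ ε * (βr * βm / 2 + δ) = δ := by
    refine ⟨δ / (βr * βm / 2 + δ), div_pos hδ hden, ?_, by field_simp⟩
    rw [div_lt_one hden]; nlinarith
  have h2ε : 0 < 2 - ε := by linarith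
  obtain ⟨γ, hγ0, hγeq⟩ : ∃ γ : ℝ, 0 < γ ∧ γ * (2 - ε) = βm :=
    ⟨βm / (2 - ε), div_pos hβm h2ε, by field_simp⟩
  have key : a * γ = -Real.log α := by
    rw [hδeq]
    have hne2 : (0 : ℝ) < βr * βm + δ := by positivity
    have h7 : a * γ * (βr * βm + δ) = (βr * βm / 2 + δ) * (βr * βm + δ) := by
      linear_combination (βr * βm / 2 + δ) * haeq + a * (βr * βm / 2 + δ) * hγeq +
        a * γ * hεeq
    exact mul_right_cancel₀ hne2.ne' h7
  -- threshold B
  obtain ⟨B, hB1, hBN, hBe⟩ : ∃ B : ℕ, 1 ≤ B ∧ N₀ ≤ B ∧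
      Real.exp ((βm / ε) ^ 2) ≤ (B : ℝ) := by
    refine ⟨max (max 1 N₀) (Nat.ceil (Real.exp ((βm / ε) ^ 2))),
      le_trans (le_max_left 1 N₀) (le_max_left _ _),
      le_trans (le_max_right 1 N₀) (le_max_left _ _), ?_⟩
    refine le_trans (Nat.le_ceil _) ?_
    exact Nat.cast_le.mpr (le_max_right (max 1 N₀) (Nat.ceil (Real.exp ((βm / ε) ^ 2))))
  -- bound on small values
  obtain ⟨C, hC1, hCprop⟩ : ∃ C : ℝ, 1 ≤ C ∧ ∀ j : ℕ, 1 ≤ j → j ≤ B →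
      (r j : ℝ) / (j : ℝ) ^ d * Real.exp (a * Real.sqrt (Real.log j)) ≤ C := by
    refine ⟨max 1 ((Finset.Icc 1 B).sup' ⟨1, Finset.mem_Icc.mpr ⟨le_rfl, hB1⟩⟩
      (fun j => (r j : ℝ) / (j : ℝ) ^ d * Real.exp (a * Real.sqrt (Real.log j)))),
      le_max_left _ _, ?_⟩
    intro j hj1 hjB
    exact le_trans (Finset.le_sup'
      (fun j => (r j : ℝ) / (j : ℝ) ^ d * Real.exp (a * Real.sqrt (Real.log j)))
      (Finset.mem_Icc.mpr ⟨hj1, hjB⟩)) (le_max_right _ _)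
  have hC0 : 0 < C := lt_of_lt_of_le one_pos hC1
  -- Main claim by strong induction
  have claim : ∀ n : ℕ, 1 ≤ n →
      (r n : ℝ) / (n : ℝ) ^ d * Real.exp (a * Real.sqrt (Real.log n)) ≤ C := by
    intro n
    induction n using Nat.strong_induction_on with
    | _ n ih =>
      intro hn
      by_cases hnB : n ≤ B
      · exact hCprop n hn hnB
      · push_neg at hnB
        have hnN₀ : N₀ < n := lt_of_le_of_lt hBN hnB
        have hnR : Real.exp ((βm / ε) ^ 2) ≤ (n : ℝ) := by
          refine le_trans hBe ?_
          exact_mod_cast le_of_lt hnB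
        have hnpos : (0 : ℝ) < (n : ℝ) := by
          have h0 : (1 : ℝ) ≤ (n : ℝ) := by exact_mod_cast hn
          linarith
        have hL0 : 0 ≤ Real.log n := hlog0 n hn
        have hLM : (βm / ε) ^ 2 ≤ Real.log n := by
          have := Real.log_le_log (Real.exp_pos _) hnR
          rwa [Real.log_exp] at this
        have hsL : βm / ε ≤ Real.sqrt (Real.log n) := by
          rw [Real.le_sqrt (by positivity) hL0]
          exact hLM
        have hsLpos : 0 < Real.sqrt (Real.log n) := lt_of_lt_of_le (by positivity) hsL
        have hmn0 : (0 : ℝ) < (m n : ℝ) := by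
          have h1 := hm₂ n hn
          have hpos : (0 : ℝ) < (n : ℝ) / Real.exp (βm * Real.sqrt (Real.log n)) :=
            div_pos hnpos (Real.exp_pos _)
          linarith
        have hmn1 : 1 ≤ m n := by
          rcases Nat.eq_zero_or_pos (m n) with h | h
          · rw [h] at hmn0; simp at hmn0
          · exact h
        have hL'0 : 0 ≤ Real.log (m n) := hlog0 _ hmn1
        have hL'le : Real.log (m n) ≤ Real.log n := by
          apply Real.log_le_log hmn0
          exact_mod_cast hm₁ n hn
        have hL'ge : Real.log n - βm * Real.sqrt (Real.log n) ≤ Real.log (m n) := by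
          have h1 := hm₂ n hn
          have h2 : Real.log ((n : ℝ) / Real.exp (βm * Real.sqrt (Real.log n))) ≤
              Real.log (m n) := Real.log_le_log (by positivity) h1
          rw [Real.log_div (by positivity) (by positivity), Real.log_exp] at h2
          linarith
        have e1 : Real.sqrt (Real.log n) * Real.sqrt (Real.log n) = Real.log n :=
          Real.mul_self_sqrt hL0
        have e2 : Real.sqrt (Real.log (m n)) * Real.sqrt (Real.log (m n)) = Real.log (m n) :=
          Real.mul_self_sqrt hL'0
        have hsL'le : Real.sqrt (Real.log (m n)) ≤ Real.sqrt (Real.log n) :=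
          Real.sqrt_le_sqrt hL'le
        have hstep : βm * Real.sqrt (Real.log n) ≤ ε * Real.log n := by
          have h1 : βm ≤ ε * Real.sqrt (Real.log n) := by
            rw [div_le_iff₀ hε0] at hsL
            linarith
          nlinarith [e1, hsLpos]
        have e1' : Real.sqrt (Real.log n) ^ 2 = Real.log n := Real.sq_sqrt hL0
        have hsL'ge : (1 - ε) * Real.sqrt (Real.log n) ≤ Real.sqrt (Real.log (m n)) := by
          rw [Real.le_sqrt (mul_nonneg (by linarith) (Real.sqrt_nonneg _)) hL'0,
            mul_pow, e1']
          have hq : (0 : ℝ) ≤ ε * (1 - ε) * Real.log n := by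
            apply mul_nonneg (mul_nonneg hε0.le (by linarith)) hL0
          nlinarith [hq, hL'ge, hstep]
        have hdec : Real.sqrt (Real.log n) - Real.sqrt (Real.log (m n)) ≤ γ := by
          have h5 : (Real.sqrt (Real.log n) - Real.sqrt (Real.log (m n))) * (2 - ε) *
              Real.sqrt (Real.log n) ≤ γ * (2 - ε) * Real.sqrt (Real.log n) := by
            rw [hγeq]
            nlinarith [e1, e2, hsL'ge, hsL'le, hL'ge, hsLpos.le]
          have h6 := le_of_mul_le_mul_right h5 hsLpos
          exact le_of_mul_le_mul_right h6 h2ε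
        have hstrict := H n hnN₀
        have hmnlt : m n < n := by
          rcases lt_or_eq_of_le (hm₁ n hn) with h | h
          · exact h
          · exfalso
            rw [h] at hstrict
            have hf := hfpos n hn
            have hα1 : α < 1 := by
              have h9 : Real.exp (-(βr * βm) / 2) ≤ 1 :=
                Real.exp_le_one_iff.mpr (by nlinarith)
              linarith
            nlinarith
        have ihm := ih (m n) hmnlt hmn1
        have ht1 : α * Real.exp (a * (Real.sqrt (Real.log n) - Real.sqrt (Real.log (m n)))) ≤ 1 := by
          have h1 : a * (Real.sqrt (Real.log n) - Real.sqrt (Real.log (m n))) ≤ a * γ :=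
            mul_le_mul_of_nonneg_left hdec ha.le
          have h2 : Real.exp (a * (Real.sqrt (Real.log n) - Real.sqrt (Real.log (m n)))) ≤
              Real.exp (a * γ) := Real.exp_le_exp.mpr h1
          have h3 : Real.exp (a * γ) = α⁻¹ := by
            rw [key, Real.exp_neg, Real.exp_log hα0]
          calc α * Real.exp (a * (Real.sqrt (Real.log n) - Real.sqrt (Real.log (m n))))
              ≤ α * Real.exp (a * γ) := by nlinarith [Real.exp_pos (a * γ)]
            _ = α * α⁻¹ := by rw [h3]
            _ = 1 := mul_inv_cancel₀ (ne_of_gt hα0)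
        refine le_of_lt ?_
        calc (r n : ℝ) / (n : ℝ) ^ d * Real.exp (a * Real.sqrt (Real.log n))
            < (α * ((r (m n) : ℝ) / (m n : ℝ) ^ d)) * Real.exp (a * Real.sqrt (Real.log n)) :=
              mul_lt_mul_of_pos_right hstrict (Real.exp_pos _)
          _ = ((r (m n) : ℝ) / (m n : ℝ) ^ d * Real.exp (a * Real.sqrt (Real.log (m n)))) *
              (α * Real.exp (a * (Real.sqrt (Real.log n) - Real.sqrt (Real.log (m n))))) := by
              rw [show a * Real.sqrt (Real.log n) = a * Real.sqrt (Real.log (m n)) +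
                a * (Real.sqrt (Real.log n) - Real.sqrt (Real.log (m n))) by ring,
                Real.exp_add]
              ring
          _ ≤ C * 1 := by
              refine mul_le_mul ihm ht1 ?_ hC0.le
              positivity
          _ = C := mul_one C
  -- final contradiction
  obtain ⟨T, hT0, hTeq⟩ : ∃ T : ℝ, 0 ≤ T ∧ (δ / βm) * T = Real.log C := by
    refine ⟨βm * Real.log C / δ, ?_, by field_simp⟩
    have : 0 ≤ Real.log C := Real.log_nonneg hC1
    positivity
  obtain ⟨n₁, hn₁1, hn₁B, hn₁R⟩ : ∃ n₁ : ℕ, 1 ≤ n₁ ∧ B < n₁ ∧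
      Real.exp ((T + 1) ^ 2) ≤ (n₁ : ℝ) := by
    refine ⟨max (B + 1) (Nat.ceil (Real.exp ((T + 1) ^ 2))), ?_, ?_, ?_⟩
    · exact le_trans (by omega) (le_max_left (B + 1) _)
    · exact lt_of_lt_of_le (by omega) (le_max_left (B + 1) _)
    · refine le_trans (Nat.le_ceil _) ?_
      exact Nat.cast_le.mpr (le_max_right (B + 1) (Nat.ceil (Real.exp ((T + 1) ^ 2))))
  have hL₁0 : 0 ≤ Real.log n₁ := hlog0 _ hn₁1
  have hL₁ge : (T + 1) ^ 2 ≤ Real.log n₁ := by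
    have := Real.log_le_log (Real.exp_pos _) hn₁R
    rwa [Real.log_exp] at this
  have hsL₁ : T + 1 ≤ Real.sqrt (Real.log n₁) := by
    rw [Real.le_sqrt (by linarith) hL₁0]
    exact hL₁ge
  have hupper := claim n₁ hn₁1
  have hn₁pos : (0 : ℝ) < (n₁ : ℝ) := by
    have h0 : (1 : ℝ) ≤ (n₁ : ℝ) := by exact_mod_cast hn₁1
    linarith
  have hlower : Real.exp (-(βr * Real.sqrt (Real.log n₁))) ≤ (r n₁ : ℝ) / (n₁ : ℝ) ^ d := by
    have h1 := hr n₁ hn₁1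
    have hP : (0 : ℝ) < (n₁ : ℝ) ^ d := by positivity
    have h2 : ((n₁ : ℝ) ^ d / Real.exp (βr * Real.sqrt (Real.log n₁))) / (n₁ : ℝ) ^ d ≤
        (r n₁ : ℝ) / (n₁ : ℝ) ^ d := by gcongr
    have h3 : ((n₁ : ℝ) ^ d / Real.exp (βr * Real.sqrt (Real.log n₁))) / (n₁ : ℝ) ^ d =
        Real.exp (-(βr * Real.sqrt (Real.log n₁))) := by
      rw [Real.exp_neg]
      field_simp
    rw [h3] at h2
    exact h2
  have haβr : a - βr = δ / βm := by
    rw [eq_div_iff hβm.ne']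
    linarith [haeq]
  have hcomb : Real.exp ((δ / βm) * Real.sqrt (Real.log n₁)) ≤ C := by
    have h1 : Real.exp (-(βr * Real.sqrt (Real.log n₁))) *
        Real.exp (a * Real.sqrt (Real.log n₁)) ≤
        (r n₁ : ℝ) / (n₁ : ℝ) ^ d * Real.exp (a * Real.sqrt (Real.log n₁)) :=
      mul_le_mul_of_nonneg_right hlower (Real.exp_pos _).le
    have h2 : Real.exp (-(βr * Real.sqrt (Real.log n₁))) *
        Real.exp (a * Real.sqrt (Real.log n₁)) =
        Real.exp ((δ / βm) * Real.sqrt (Real.log n₁)) := by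
      rw [← Real.exp_add]
      congr 1
      rw [← haβr]
      ring
    rw [h2] at h1
    linarith
  have hfin : (δ / βm) * Real.sqrt (Real.log n₁) ≤ Real.log C := by
    have := Real.log_le_log (Real.exp_pos _) hcomb
    rwa [Real.log_exp] at this
  have hδβ : 0 < δ / βm := div_pos hδ hβm
  nlinarith [mul_le_mul_of_nonneg_left hsL₁ hδβ.le]
end

section
/- For every X ⊆ ℕ with |X| ≥ 3, there exists a constant c_X > 0 depending only on X such that for all n ∈ ℕ, r_X(n) ≥ n · exp(−c_X·√(log n)), where r_X(n) is the maximum size of a subset of {1,…,n} containing no non-trivial affine copy of X. -/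
/-- A finset `Y ⊆ ℕ` is a non-trivial copy of `X ⊆ ℕ` if `Y = b + r • X`
for some `b ∈ ℝ` and real `r > 0`. -/
def IsNontrivialCopy1 (X Y : Finset ℕ) : Prop :=
  ∃ (b r : ℝ), 0 < r ∧
    (Y.image fun a : ℕ => (a : ℝ)) = X.image fun x : ℕ => b + r * (x : ℝ)

/-- `A` is `X`-free if it contains no non-trivial copy of `X`. -/
def XFree1 (X A : Finset ℕ) : Prop :=
  ∀ Y ⊆ A, ¬ IsNontrivialCopy1 X Y

/-- `r_X(n)`: the maximum cardinality of an `X`-free subset of `{1,…,n}`. -/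
noncomputable def rXmax1 (X : Finset ℕ) (n : ℕ) : ℕ :=
  sSup {m : ℕ | ∃ A : Finset ℕ, A ⊆ Finset.Icc 1 n ∧ XFree1 X A ∧ A.card = m}

/-!
Behrend's construction works for any three points `p < q < s` of `X`, because a copy of `X`
contains `x ≠ z` and `y` with `(s - q) x + (q - p) z = (s - p) y`. For integer points `u, v, w` of
a sphere in `[0, d)^m` and positive weights, `b • u + a • w = (a + b) • v` forces `u = w`, since
`a b ‖u - w‖² = (a + b) (b ‖u‖² + a ‖w‖²) - ‖(a + b) • v‖²`. Reading these points as base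
`(s - p) d` expansions causes no carries, so the integers obtained avoid the relation. Taking
`m ≈ √(log n)` and `d ≈ n^(1/m) / (s - p)`, some sphere holds a `1 / (m d²)` fraction of the
`d^m` points of the cube, which is at least `n exp (-c √(log n))`.
-/

open Finset Real

namespace Behrend

variable {m d k : ℕ}

lemma map_lt_pow {B : ℕ} {u : Fin m → ℕ} (hu : ∀ i, u i < B) : map B u < B ^ m := by
  induction m with
  | zero => simp
  | succ m ih =>
    have hsucc : map B (u ∘ Fin.succ) < B ^ m := ih fun i => hu i.succ
    rw [map_succ', pow_succ]
    linarith [hu 0, Nat.mul_le_mul_right B hsucc]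

lemma lt_of_mem_sphere {B : ℕ} {u : Fin m → ℕ} (hu : u ∈ sphere m d k) (hdB : d ≤ B) (i : Fin m) :
    u i < B :=
  (mem_box.1 (sphere_subset_box hu) i).trans_le hdB

theorem eq_of_smul_add_smul_eq_of_mem_sphere {a b : ℕ} (ha : 0 < a) (hb : 0 < b)
    {u v w : Fin m → ℕ} (hu : u ∈ sphere m d k) (hv : v ∈ sphere m d k) (hw : w ∈ sphere m d k)
    (h : b • u + a • w = (a + b) • v) : u = w := by
  have hsq : ∀ x ∈ sphere m d k, ∑ i, (x i : ℤ) ^ 2 = k := fun x hx => by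
    exact_mod_cast (mem_filter.1 hx).2
  have hi : ∀ i, (b : ℤ) * u i + a * w i = (a + b) * v i := fun i => by
    exact_mod_cast congrFun h i
  have hsum : ∑ i, (a * b : ℤ) * ((u i : ℤ) - w i) ^ 2 = 0 := calc
    _ = ∑ i, ((a + b : ℤ) * (b * (u i : ℤ) ^ 2 + a * (w i : ℤ) ^ 2)
          - (a + b) ^ 2 * (v i : ℤ) ^ 2) := sum_congr rfl fun i _ => by
        linear_combination (-((a + b) * v i + b * u i + a * w i : ℤ)) * hi i
    _ = 0 := by
      simp only [sum_sub_distrib, mul_add, sum_add_distrib, ← mul_sum, hsq u hu, hsq v hv, hsq w hw]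
      ring
  funext i
  have hterm := (sum_eq_zero_iff_of_nonneg fun i _ => by positivity).1 hsum i (mem_univ i)
  have : (u i : ℤ) = w i := by
    simpa [ha.ne', hb.ne', sub_eq_zero] using hterm
  exact_mod_cast this

theorem eq_of_mul_map_add_mul_map_eq {a b : ℕ} (ha : 0 < a) (hb : 0 < b) {u v w : Fin m → ℕ}
    (hu : u ∈ sphere m d k) (hv : v ∈ sphere m d k) (hw : w ∈ sphere m d k)
    (h : b * map ((a + b) * d) u + a * map ((a + b) * d) w = (a + b) * map ((a + b) * d) v) :
    u = w := by
  refine eq_of_smul_add_smul_eq_of_mem_sphere ha hb hu hv hw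
    (map_injOn (d := (a + b) * d) (fun i => ?_) (fun i => ?_) ?_)
  · simp only [Pi.add_apply, Pi.smul_apply, smul_eq_mul]
    nlinarith [lt_of_mem_sphere hu le_rfl i, lt_of_mem_sphere hw le_rfl i]
  · simp only [Pi.smul_apply, smul_eq_mul]
    nlinarith [lt_of_mem_sphere hv le_rfl i]
  · simpa only [map_add, map_nsmul, smul_eq_mul] using h

end Behrend

def behrendSet (B m d k : ℕ) : Finset ℕ :=
  (Behrend.sphere m d k).image fun u => Behrend.map B u + 1

section behrendSet

variable {B m d k : ℕ}

lemma card_behrendSet (hdB : d ≤ B) : #(behrendSet B m d k) = #(Behrend.sphere m d k) :=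
  card_image_of_injOn fun _ hu _ hw huw =>
    Behrend.map_injOn (Behrend.lt_of_mem_sphere hu hdB)
      (Behrend.lt_of_mem_sphere hw hdB) (add_right_cancel huw)

lemma behrendSet_subset_Icc (hdB : d ≤ B) : behrendSet B m d k ⊆ Icc 1 (B ^ m) := by
  simp only [behrendSet, subset_iff, mem_image, mem_Icc]
  rintro _ ⟨u, hu, rfl⟩
  exact ⟨by omega, Behrend.map_lt_pow (Behrend.lt_of_mem_sphere hu hdB)⟩

end behrendSet

lemma two_mul_le_exp (t : ℝ) : 2 * t ≤ exp t := by
  rcases le_or_gt 0 t with ht | ht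
  · nlinarith [quadratic_le_exp_of_nonneg ht, sq_nonneg (t - 1)]
  · linarith [exp_pos t]

lemma mul_exp_neg_mul_sqrt_log_le_one {N c : ℝ} (hN : 1 ≤ N) (hc : √(log N) ≤ c) :
    N * exp (-c * √(log N)) ≤ 1 := by
  have hlog : log N = √(log N) ^ 2 := (sq_sqrt (log_nonneg hN)).symm
  nth_rewrite 1 [← exp_log (by linarith : 0 < N)]
  rw [← exp_add, exp_le_one_iff]
  nlinarith [sqrt_nonneg (log N)]

lemma mul_floor_div_le_and_le_two_mul {K E : ℝ} (hK : 0 < K) (hKE : 2 * K ≤ E) :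
    K * ⌊E / K⌋₊ ≤ E ∧ E ≤ 2 * K * ⌊E / K⌋₊ := by
  have hfloor := Nat.floor_le (div_nonneg (by linarith : 0 ≤ E) hK.le)
  have hlt := Nat.sub_one_lt_floor (E / K)
  rw [le_div_iff₀' hK] at hfloor
  rw [sub_lt_iff_lt_add, div_lt_iff₀ hK] at hlt
  constructor <;> linarith

lemma two_mul_mul_pow_le {K t : ℝ} {m d : ℕ} (hK : 1 ≤ K) (hm : 0 < m) (hmt : m ≤ 2 * t)
    (hd : 0 < d) (hdt : d ≤ exp t) :
    (2 * K * d) ^ m ≤ exp ((2 * log (2 * K) + 3) * t) * (d ^ m / (m * d ^ 2)) := by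
  have hlogK : 0 ≤ log (2 * K) := log_nonneg (by linarith)
  have hpow : (2 * K) ^ m ≤ exp (2 * log (2 * K) * t) := by
    rw [← exp_log (by linarith : 0 < 2 * K), ← exp_nat_mul, exp_log (by linarith)]
    exact exp_le_exp.2 (by nlinarith)
  calc (2 * K * d) ^ m = (2 * K) ^ m * (m * d ^ 2) * (d ^ m / (m * d ^ 2)) := by
        field_simp; ring
    _ ≤ exp (2 * log (2 * K) * t) * (exp t * exp t ^ 2) * (d ^ m / (m * d ^ 2)) := by
      gcongr
      exact hmt.trans (two_mul_le_exp t)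
    _ = exp ((2 * log (2 * K) + 3) * t) * (d ^ m / (m * d ^ 2)) := by
      rw [sq, ← exp_add, ← exp_add, ← exp_add]; ring_nf

lemma exists_pow_le_and_le_pow_div {K N : ℝ} (hK : 1 ≤ K) (hN : 1 ≤ N)
    (ht : max 1 (2 * log (2 * K)) ≤ √(log N)) :
    ∃ m d : ℕ, (K * d) ^ m ≤ N ∧
      N * exp (-(2 * log (2 * K) + 3) * √(log N)) ≤ d ^ m / (m * d ^ 2) := by
  set t := √(log N)
  obtain ⟨ht1, hlogt⟩ := max_le_iff.1 ht
  have hlog : log N = t ^ 2 := (sq_sqrt (log_nonneg hN)).symm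
  set m := ⌈t⌉₊
  have hm : t ≤ m := Nat.le_ceil t
  have hm2 : (m : ℝ) ≤ 2 * t := Nat.ceil_le_two_mul (by linarith)
  have hm0 : (0 : ℝ) < m := by linarith
  set E := exp (log N / m)
  have hEm : E ^ m = N := by
    rw [← exp_nat_mul, mul_div_cancel₀ _ hm0.ne', exp_log (by linarith)]
  have hEt : E ≤ exp t := exp_le_exp.2 <| by
    rw [div_le_iff₀ hm0, hlog]; nlinarith
  have hKE : 2 * K ≤ E := by
    rw [← exp_log (by linarith : 0 < 2 * K)]
    refine exp_le_exp.2 ?_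
    rw [le_div_iff₀ hm0, hlog]; nlinarith [log_nonneg (by linarith : 1 ≤ 2 * K)]
  set d := ⌊E / K⌋₊
  obtain ⟨hdK, hEd⟩ := mul_floor_div_le_and_le_two_mul (by linarith) hKE
  have hd0 : (0 : ℝ) < d := by nlinarith
  refine ⟨m, d, (pow_le_pow_left₀ (by positivity) hdK m).trans hEm.le, ?_⟩
  have hN : N ≤ exp ((2 * log (2 * K) + 3) * t) * (d ^ m / (m * d ^ 2)) := calc
    N = E ^ m := hEm.symm
    _ ≤ (2 * K * d) ^ m := pow_le_pow_left₀ (by positivity) hEd m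
    _ ≤ _ := two_mul_mul_pow_le hK (by exact_mod_cast hm0) hm2 (by exact_mod_cast hd0)
      (by nlinarith)
  rwa [neg_mul, exp_neg, ← div_eq_mul_inv, div_le_iff₀' (exp_pos _)]

lemma exists_lt_lt_of_three_le_card {X : Finset ℕ} (hX : 3 ≤ #X) :
    ∃ p ∈ X, ∃ q ∈ X, ∃ s ∈ X, p < q ∧ q < s :=
  let f := X.orderEmbOfFin rfl
  ⟨f ⟨0, by omega⟩, X.orderEmbOfFin_mem rfl _, f ⟨1, by omega⟩, X.orderEmbOfFin_mem rfl _,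
    f ⟨2, by omega⟩, X.orderEmbOfFin_mem rfl _, f.strictMono (by simp), f.strictMono (by simp)⟩

lemma card_le_rXmax1 {X A : Finset ℕ} {n : ℕ} (hA : A ⊆ Icc 1 n) (hfree : XFree1 X A) :
    #A ≤ rXmax1 X n := by
  refine le_csSup ⟨n, ?_⟩ ⟨A, hA, hfree, rfl⟩
  rintro _ ⟨A', hA', -, rfl⟩
  simpa using card_le_card hA'

section Pattern

variable {X : Finset ℕ} {p q s : ℕ} (hp : p ∈ X) (hq : q ∈ X) (hs : s ∈ X) (hpq : p < q)
  (hqs : q < s)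
include hp hq hs hpq hqs

lemma xFree1_of_forall_eq_of_mul_add_mul_eq {A : Finset ℕ}
    (h : ∀ x ∈ A, ∀ y ∈ A, ∀ z ∈ A, (s - q) * x + (q - p) * z = (s - p) * y → x = z) :
    XFree1 X A := by
  rintro Y hY ⟨b, r, hr, himg⟩
  have hmem : ∀ t ∈ X, ∃ x ∈ Y, (x : ℝ) = b + r * t := fun t ht => by
    simpa [← himg] using mem_image_of_mem (fun x : ℕ => b + r * (x : ℝ)) ht
  obtain ⟨x, hxY, hx⟩ := hmem p hp
  obtain ⟨y, hyY, hy⟩ := hmem q hq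
  obtain ⟨z, hzY, hz⟩ := hmem s hs
  have hxz : (x : ℝ) < z := by
    rw [hx, hz]
    gcongr
    exact_mod_cast hpq.trans hqs
  refine hxz.ne (congrArg _ (h x (hY hxY) y (hY hyY) z (hY hzY) ?_))
  have : ((s - q : ℕ) : ℝ) * x + ((q - p : ℕ) : ℝ) * z = ((s - p : ℕ) : ℝ) * y := by
    rw [hx, hy, hz, Nat.cast_sub hqs.le, Nat.cast_sub hpq.le, Nat.cast_sub (hpq.trans hqs).le]
    ring
  exact_mod_cast this

lemma xFree1_behrendSet (m d k : ℕ) : XFree1 X (behrendSet ((s - p) * d) m d k) := by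
  refine xFree1_of_forall_eq_of_mul_add_mul_eq hp hq hs hpq hqs ?_
  simp only [behrendSet, mem_image]
  rintro _ ⟨u, hu, rfl⟩ _ ⟨v, hv, rfl⟩ _ ⟨w, hw, rfl⟩ h
  rw [show s - p = (q - p) + (s - q) by omega] at h ⊢
  rw [Behrend.eq_of_mul_map_add_mul_map_eq (a := q - p) (b := s - q) (by omega) (by omega)
    hu hv hw (by linarith)]

lemma one_le_rXmax1 {n : ℕ} (hn : 1 ≤ n) : 1 ≤ rXmax1 X n := by
  simpa using card_le_rXmax1 (by simpa) <|
    xFree1_of_forall_eq_of_mul_add_mul_eq hp hq hs hpq hqs (A := {1}) (by simp)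

lemma card_sphere_le_rXmax1 {m d k n : ℕ} (hn : ((s - p) * d) ^ m ≤ n) :
    #(Behrend.sphere m d k) ≤ rXmax1 X n := by
  have hdB : d ≤ (s - p) * d := Nat.le_mul_of_pos_left d (by omega)
  rw [← card_behrendSet hdB]
  exact card_le_rXmax1 ((behrendSet_subset_Icc hdB).trans (Icc_subset_Icc_right hn))
    (xFree1_behrendSet hp hq hs hpq hqs m d k)

lemma pow_div_le_rXmax1 {m d n : ℕ} (hn : ((s - p) * d) ^ m ≤ n) :
    (d ^ m / (m * d ^ 2) : ℝ) ≤ rXmax1 X n := by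
  obtain ⟨k, hk⟩ := Behrend.exists_large_sphere m d
  push_cast at hk
  exact hk.trans (by exact_mod_cast card_sphere_le_rXmax1 hp hq hs hpq hqs (k := k) hn)

end Pattern

theorem stmt8 (X : Finset ℕ) (hX : 3 ≤ X.card) :
    ∃ c : ℝ, 0 < c ∧ ∀ n : ℕ,
      (rXmax1 X n : ℝ) ≥ (n : ℝ) * Real.exp (-c * Real.sqrt (Real.log n)) := by
  obtain ⟨p, hp, q, hq, s, hs, hpq, hqs⟩ := exists_lt_lt_of_three_le_card hX
  have hK : (1 : ℝ) ≤ (s - p : ℕ) := by exact_mod_cast (by omega : 1 ≤ s - p)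
  have hlogK : 0 ≤ log (2 * (s - p : ℕ)) := log_nonneg (by linarith)
  refine ⟨2 * log (2 * (s - p : ℕ)) + 3, by positivity, fun n => ?_⟩
  rcases n.eq_zero_or_pos with rfl | hn
  · simp
  have hn' : (1 : ℝ) ≤ n := by exact_mod_cast hn
  by_cases ht : max 1 (2 * log (2 * (s - p : ℕ))) ≤ √(log n)
  · obtain ⟨m, d, hpow, hle⟩ := exists_pow_le_and_le_pow_div hK hn' ht
    exact hle.trans (pow_div_le_rXmax1 hp hq hs hpq hqs (by exact_mod_cast hpow))
  · have ht' : √(log n) ≤ 2 * log (2 * (s - p : ℕ)) + 3 := by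
      rcases lt_max_iff.1 (not_le.1 ht) with h | h <;> linarith
    exact (mul_exp_neg_mul_sqrt_log_le_one hn' ht').trans
      (by exact_mod_cast one_le_rXmax1 hp hq hs hpq hqs hn)
end

section
/- Let d ≥ 1 and X ⊆ ℕ^d finite with |X| ≥ 2, and suppose no integer t > 1 divides every coordinate of x − y for all x, y ∈ X (X is a minimal copy of itself). If b + rX ⊆ b' + p·{1,…,M}^d where b ∈ ℝ^d, r > 0, b' ∈ ℤ^d, p is a prime, and M ≥ 1, then r is a positive integer divisible by p. -/
theorem stmt13 (d : ℕ) (hd : 1 ≤ d) (X : Finset (Fin d → ℕ)) (hX : 2 ≤ X.card)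
    (hmin : ¬ ∃ t : ℕ, 1 < t ∧ ∀ x ∈ X, ∀ y ∈ X, ∀ i, (t : ℤ) ∣ ((x i : ℤ) - (y i : ℤ)))
    (b : Fin d → ℝ) (r : ℝ) (hr : 0 < r) (b' : Fin d → ℤ)
    (p : ℕ) (hp : p.Prime) (M : ℕ) (hM : 1 ≤ M)
    (hsub : ∀ x ∈ X, ∃ v : Fin d → ℕ, (∀ i, v i ∈ Finset.Icc 1 M) ∧
      ∀ i, b i + r * (x i : ℝ) = (b' i : ℝ) + (p : ℝ) * (v i : ℝ)) :
    ∃ k : ℕ, 0 < k ∧ r = (k : ℝ) ∧ p ∣ k := by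
  classical
  -- the subgroup of integers s with r*s ∈ pℤ
  set K : AddSubgroup ℤ :=
    { carrier := {s : ℤ | ∃ m : ℤ, r * (s : ℝ) = (p : ℝ) * (m : ℝ)}
      zero_mem' := ⟨0, by simp⟩
      add_mem' := by
        rintro a b ⟨m1, h1⟩ ⟨m2, h2⟩
        exact ⟨m1 + m2, by push_cast; push_cast at h1 h2; ring_nf; ring_nf at h1 h2; linarith⟩
      neg_mem' := by
        rintro a ⟨m, h⟩
        exact ⟨-m, by push_cast; push_cast at h; linarith⟩ } with hK
  set S : Set ℤ := {s : ℤ | ∃ x ∈ X, ∃ y ∈ X, ∃ i, s = (x i : ℤ) - (y i : ℤ)} with hS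
  have hSK : S ⊆ K := by
    rintro s ⟨x, hx, y, hy, i, rfl⟩
    obtain ⟨vx, -, hvx⟩ := hsub x hx
    obtain ⟨vy, -, hvy⟩ := hsub y hy
    refine ⟨(vx i : ℤ) - (vy i : ℤ), ?_⟩
    have h1 := hvx i
    have h2 := hvy i
    push_cast
    linarith
  have hle : AddSubgroup.closure S ≤ K := (AddSubgroup.closure_le K).mpr hSK
  obtain ⟨g, hg⟩ := Int.subgroup_cyclic (AddSubgroup.closure S)
  have hmem : ∀ s ∈ S, g ∣ s := by
    intro s hs
    have : s ∈ AddSubgroup.closure ({g} : Set ℤ) := by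
      rw [← hg]; exact AddSubgroup.subset_closure hs
    rw [AddSubgroup.mem_closure_singleton] at this
    obtain ⟨n, hn⟩ := this
    exact Dvd.intro_left n (by rw [smul_eq_mul] at hn; exact hn)
  -- there is a nonzero difference
  obtain ⟨x, hx, y, hy, hxy⟩ := Finset.one_lt_card.mp hX
  have hxyne : ∃ i, x i ≠ y i := by
    by_contra h
    push_neg at h
    exact hxy (funext h)
  obtain ⟨i, hi⟩ := hxyne
  have hsne : ((x i : ℤ) - (y i : ℤ)) ≠ 0 := by
    intro h
    exact hi (by omega)
  have hgne : g ≠ 0 := by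
    intro h
    have := hmem _ ⟨x, hx, y, hy, i, rfl⟩
    rw [h] at this
    exact hsne (zero_dvd_iff.mp this)
  have hgabs : g.natAbs = 1 := by
    by_contra h
    have h2 : 1 < g.natAbs := by
      rcases Nat.lt_or_ge g.natAbs 2 with h' | h'
      · interval_cases hh : g.natAbs <;> simp_all [Int.natAbs_eq_zero]
      · omega
    exact hmin ⟨g.natAbs, h2, fun a ha c hc j =>
      Int.natAbs_dvd.mpr (hmem _ ⟨a, ha, c, hc, j, rfl⟩)⟩
  have hone : (1 : ℤ) ∈ K := by
    have hg1 : g ∣ 1 := (Int.isUnit_iff_natAbs_eq.mpr hgabs).dvd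
    have : (1 : ℤ) ∈ AddSubgroup.closure ({g} : Set ℤ) := by
      rw [AddSubgroup.mem_closure_singleton]
      obtain ⟨c, hc⟩ := hg1
      exact ⟨c, by rw [smul_eq_mul, mul_comm]; exact hc.symm⟩
    rw [← hg] at this
    exact hle this
  obtain ⟨m, hm⟩ := hone
  have hrm : r = (p : ℝ) * (m : ℝ) := by push_cast at hm; linarith
  have hmpos : 0 < m := by
    by_contra h
    push_neg at h
    have : (p : ℝ) * (m : ℝ) ≤ 0 := by
      apply mul_nonpos_of_nonneg_of_nonpos (by positivity)
      exact_mod_cast h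
    linarith [hrm ▸ hr]
  refine ⟨p * m.toNat, ?_, ?_, ⟨m.toNat, rfl⟩⟩
  · exact Nat.mul_pos hp.pos (by omega)
  · rw [hrm]; push_cast; congr 1; exact_mod_cast (Int.toNat_of_nonneg hmpos.le).symm
end
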